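/- Let V = F_4^5 with primitive element α of F_4, and let P = ⟨x_1,...,x_5⟩ be a simplex point with x_i = 0. If a simplex point Q = ⟨y_1,...,y_5⟩ is adjacent to P (the span of P and Q is a simplex line), then Σ_{j≠i} x_j^{-1} y_j = 0. Conversely, a simplex point Q = ⟨y_1,...,y_5⟩ is adjacent to P if and only if y_i ≠ 0 and Σ_{j≠i} x_j^{-1} y_j = 0. -/

import Mathlib

/-- A vector of `F^n` is *simplex* if exactly one of its coordinates is zero. -/
def SimplexVec {F : Type*} [Field F] [DecidableEq F] {n : ℕ} (x : Fin n → F) : Prop :=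
  (Finset.univ.filter (fun i => x i = 0)).card = 1

/-- A *simplex point* is a 1-dimensional subspace spanned by a simplex vector. -/
def SimplexPoint {F : Type*} [Field F] [DecidableEq F] {n : ℕ}
    (P : Submodule F (Fin n → F)) : Prop :=
  ∃ x : Fin n → F, SimplexVec x ∧ P = Submodule.span F {x}

/-- A *simplex line* is a 2-dimensional subspace all of whose nonzero vectors
are simplex. -/
def SimplexLine {F : Type*} [Field F] [DecidableEq F] {n : ℕ}
    (L : Submodule F (Fin n → F)) : Prop :=
  Module.finrank F ↥L = 2 ∧ ∀ x ∈ L, x ≠ 0 → SimplexVec x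


/-!
When `y i ≠ 0`, every nonzero vector of `⟨x, y⟩` is a multiple of `x` or of some `c • x + y`,
and `c • x + y` vanishes exactly at the coordinates `j ≠ i` with `x_j⁻¹ y_j = -c`. Hence the
points are adjacent iff `j ↦ x_j⁻¹ y_j` maps the coordinates `j ≠ i` bijectively onto `F`,
and then the sum is `∑_{c ∈ F} c = 0`. When `y i = 0`, some combination of `x` and `y` vanishes
at `i` and at one more coordinate. Conversely, over `F_4` the three nonzero ratios sum to zero,
and in characteristic `2` two equal ones would force the third to vanish; so the four ratios
are distinct.
-/
open Submodule Module

theorem Set.bijOn_univ_iff_forall_existsUnique {α β : Type*} {f : α → β} {s : Set α} :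
    Set.BijOn f s Set.univ ↔ ∀ b, ∃! a, a ∈ s ∧ f a = b := by
  refine ⟨fun h b => ?_,
    fun h => ⟨Set.mapsTo_univ _ _, fun a ha a' ha' e => ?_, fun b _ => ?_⟩⟩
  · obtain ⟨a, ha, rfl⟩ := h.surjOn (Set.mem_univ b)
    exact ⟨a, ⟨ha, rfl⟩, fun a' ⟨ha', e⟩ => h.injOn ha' ha e⟩
  · exact (h (f a)).unique ⟨ha, rfl⟩ ⟨ha', e.symm⟩
  · obtain ⟨a, ha, -⟩ := h b
    exact ⟨a, ha⟩

section SimplexGeometry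

variable {F : Type*} [Field F] {n : ℕ} {x y : Fin n → F} {i j : Fin n}

theorem span_singleton_ne_of_apply (hxi : x i = 0) (hyi : y i ≠ 0) :
    span F {x} ≠ span F {y} := by
  intro h
  obtain ⟨a, rfl⟩ := mem_span_singleton.mp (h ▸ mem_span_singleton_self y)
  simp [hxi] at hyi

theorem finrank_span_singleton_sup (hx0 : x ≠ 0) (hxi : x i = 0) (hyi : y i ≠ 0) :
    finrank F ↥(span F {x} ⊔ span F {y}) = 2 := by
  have hli : LinearIndependent F ![x, y] := by
    refine LinearIndependent.pair_iff.mpr fun a b hab => ?_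
    have hb : b = 0 := by simpa [hxi, hyi] using congrFun hab i
    subst hb
    exact ⟨by simpa [hx0] using hab, rfl⟩
  rw [← span_insert, ← Matrix.range_cons_cons_empty x y ![], finrank_span_eq_card hli,
    Fintype.card_fin]

variable [DecidableEq F]

def SimplexAdjacent (P Q : Submodule F (Fin n → F)) : Prop :=
  P ≠ Q ∧ SimplexLine (P ⊔ Q)

theorem simplexVec_iff_existsUnique : SimplexVec x ↔ ∃! j, x j = 0 := by
  simp [SimplexVec, Finset.card_eq_one_iff_existsUnique]

theorem SimplexVec.eq_of_apply_eq_zero (hx : SimplexVec x) (hi : x i = 0) (hj : x j = 0) :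
    j = i :=
  (simplexVec_iff_existsUnique.mp hx).unique hj hi

theorem SimplexVec.apply_ne_zero (hx : SimplexVec x) (hi : x i = 0) (hj : j ≠ i) : x j ≠ 0 :=
  fun h => hj (hx.eq_of_apply_eq_zero hi h)

theorem SimplexVec.ne_zero (hx : SimplexVec x) (hi : x i = 0) (hj : j ≠ i) : x ≠ 0 :=
  fun h => hx.apply_ne_zero hi hj (by simp [h])

theorem simplexVec_smul_iff {a : F} (ha : a ≠ 0) : SimplexVec (a • x) ↔ SimplexVec x := by
  simp [simplexVec_iff_existsUnique, ha]

theorem simplexLine_span_singleton_sup_iff (hx : SimplexVec x) (hx0 : x ≠ 0) (hxi : x i = 0)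
    (hyi : y i ≠ 0) :
    SimplexLine (span F {x} ⊔ span F {y}) ↔ ∀ c : F, SimplexVec (c • x + y) := by
  rw [SimplexLine, finrank_span_singleton_sup hx0 hxi hyi, ← span_insert, and_iff_right rfl]
  constructor
  · intro h c
    refine h _ (mem_span_pair.mpr ⟨c, 1, by rw [one_smul]⟩) fun h0 => hyi ?_
    simpa [hxi] using congrFun h0 i
  · rintro h v hv hv0
    obtain ⟨a, b, rfl⟩ := mem_span_pair.mp hv
    rcases eq_or_ne b 0 with rfl | hb
    · have ha : a ≠ 0 := by
        rintro rfl
        simp at hv0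
      simpa [simplexVec_smul_iff ha] using hx
    · rw [show a • x + b • y = b • ((b⁻¹ * a) • x + y) by
        rw [smul_add, smul_smul, mul_inv_cancel_left₀ hb], simplexVec_smul_iff hb]
      exact h _

theorem smul_add_apply_eq_zero_iff (hx : SimplexVec x) (hxi : x i = 0) (hyi : y i ≠ 0) (c : F) :
    (c • x + y) j = 0 ↔ j ≠ i ∧ (x j)⁻¹ * y j = -c := by
  rcases eq_or_ne j i with rfl | hj
  · simp [hxi, hyi]
  · simp only [Pi.add_apply, Pi.smul_apply, smul_eq_mul, ne_eq, hj, not_false_eq_true, true_and,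
      inv_mul_eq_iff_eq_mul₀ (hx.apply_ne_zero hxi hj)]
    constructor <;> intro h <;> linear_combination h

theorem forall_simplexVec_smul_add_iff_bijOn (hx : SimplexVec x) (hxi : x i = 0)
    (hyi : y i ≠ 0) :
    (∀ c : F, SimplexVec (c • x + y)) ↔
      Set.BijOn (fun j => (x j)⁻¹ * y j) ↑(Finset.univ.erase i) Set.univ := by
  simp_rw [simplexVec_iff_existsUnique, smul_add_apply_eq_zero_iff hx hxi hyi,
    Set.bijOn_univ_iff_forall_existsUnique, Finset.coe_erase, Finset.coe_univ, Set.mem_sdiff,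
    Set.mem_univ, true_and, Set.mem_singleton_iff]
  exact ⟨fun h c => by simpa using h (-c), fun h c => h (-c)⟩

theorem not_simplexAdjacent_of_apply_eq_zero (hx : SimplexVec x) (hy : SimplexVec y)
    (hxi : x i = 0) (hyi : y i = 0) (hj : j ≠ i) :
    ¬ SimplexAdjacent (span F {x}) (span F {y}) := by
  rintro ⟨hne, -, hline⟩
  set v := y j • x - x j • y
  have hv0 : v ≠ 0 := by
    intro h
    apply hne
    rw [← span_singleton_smul_eq (hy.apply_ne_zero hyi hj).isUnit x, sub_eq_zero.mp h,
      span_singleton_smul_eq (hx.apply_ne_zero hxi hj).isUnit]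
  have hv : v ∈ span F {x} ⊔ span F {y} :=
    sub_mem (smul_mem _ _ (mem_sup_left (mem_span_singleton_self x)))
      (smul_mem _ _ (mem_sup_right (mem_span_singleton_self y)))
  refine hj ((hline v hv hv0).eq_of_apply_eq_zero (i := i) ?_ ?_)
  · simp [v, hxi, hyi]
  · simp only [v, Pi.sub_apply, Pi.smul_apply, smul_eq_mul]
    ring

theorem simplexAdjacent_iff_bijOn (hx : SimplexVec x) (hy : SimplexVec y) (hxi : x i = 0)
    (hj : j ≠ i) :
    SimplexAdjacent (span F {x}) (span F {y}) ↔
      y i ≠ 0 ∧ Set.BijOn (fun j => (x j)⁻¹ * y j) ↑(Finset.univ.erase i) Set.univ := by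
  by_cases hyi : y i = 0
  · simp [hyi, not_simplexAdjacent_of_apply_eq_zero hx hy hxi hyi hj]
  · rw [SimplexAdjacent, simplexLine_span_singleton_sup_iff hx (hx.ne_zero hxi hj) hxi hyi,
      forall_simplexVec_smul_add_iff_bijOn hx hxi hyi]
    simp [hyi, span_singleton_ne_of_apply hxi hyi]

end SimplexGeometry

section FiniteField

variable {ι F : Type*} [Field F] {s : Finset ι} {f : ι → F}

theorem Finset.sum_eq_zero_of_bijOn_univ [Fintype F] (hF : 2 < Fintype.card F)
    (h : Set.BijOn f s Set.univ) : ∑ j ∈ s, f j = 0 := by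
  calc ∑ j ∈ s, f j = ∑ c : F, c :=
        Finset.sum_nbij f (fun _ _ => Finset.mem_univ _) h.injOn (by simpa using h.surjOn)
          fun _ _ => rfl
    _ = 0 := by simpa using FiniteField.sum_pow_lt_card_sub_one F 1 (by omega)

theorem Finset.injOn_of_card_eq_three_of_sum_eq_zero [CharP F 2] (hs : s.card = 3)
    (hf : ∀ j ∈ s, f j ≠ 0) (hsum : ∑ j ∈ s, f j = 0) : Set.InjOn f s := by
  classical
  obtain ⟨a, b, c, hab, hac, hbc, rfl⟩ := Finset.card_eq_three.mp hs
  simp only [Finset.mem_insert, Finset.mem_singleton, forall_eq_or_imp, forall_eq] at hf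
  rw [Finset.sum_insert (by simp [hab, hac]), Finset.sum_pair hbc] at hsum
  intro j hj j' hj' e
  simp only [Finset.coe_insert, Finset.coe_singleton, Set.mem_insert_iff,
    Set.mem_singleton_iff] at hj hj'
  -- in characteristic `2`, `f a = f b` turns `f a + (f b + f c) = 0` into `f c = 0`
  grind

theorem Finset.bijOn_univ_of_card_eq_four_of_sum_eq_zero [Fintype F] [CharP F 2]
    (hF : Fintype.card F = 4) (hs : s.card = 4) {k : ι} (hk : k ∈ s)
    (hzero : ∀ j ∈ s, f j = 0 ↔ j = k) (hsum : ∑ j ∈ s, f j = 0) : Set.BijOn f s Set.univ := by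
  classical
  have hinj_erase : Set.InjOn f (s.erase k) := by
    refine Finset.injOn_of_card_eq_three_of_sum_eq_zero (by rw [Finset.card_erase_of_mem hk, hs])
      (fun j hj => ?_) (by rwa [Finset.sum_erase s ((hzero k hk).mpr rfl)])
    obtain ⟨hjk, hj⟩ := Finset.mem_erase.mp hj
    exact fun h => hjk ((hzero j hj).mp h)
  have hinj : Set.InjOn f s := by
    rw [← Finset.insert_erase hk, Finset.coe_insert, Set.injOn_insert (by simp)]
    refine ⟨hinj_erase, fun ⟨j, hj, e⟩ => ?_⟩
    obtain ⟨hjk, hj⟩ := Finset.mem_erase.mp hj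
    exact hjk ((hzero j hj).mp (e.trans ((hzero k hk).mpr rfl)))
  refine ⟨Set.mapsTo_univ _ _, hinj, ?_⟩
  simpa using Finset.surjOn_of_injOn_of_card_le f (t := Finset.univ) (by simp) hinj
    (by rw [Finset.card_univ, hF, hs])

end FiniteField

/-- Adjacency criterion for simplex points of `F_4^5`: if `P = ⟨x⟩` with
`x i = 0` and `Q = ⟨y⟩` is adjacent to `P`, then `∑_{j ≠ i} x_j⁻¹ y_j = 0`;
moreover `Q` is adjacent to `P` iff `y i ≠ 0` and `∑_{j ≠ i} x_j⁻¹ y_j = 0`. -/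
theorem adjacency_criterion_F4
    (F : Type*) [Field F] [Fintype F] [DecidableEq F] (hF : Fintype.card F = 4)
    (x y : Fin 5 → F) (hx : SimplexVec x) (hy : SimplexVec y)
    (i : Fin 5) (hxi : x i = 0) :
    ((Submodule.span F {x} ≠ Submodule.span F {y} ∧
        SimplexLine (Submodule.span F {x} ⊔ Submodule.span F {y})) →
      ∑ j ∈ Finset.univ.erase i, (x j)⁻¹ * y j = 0) ∧
    ((Submodule.span F {x} ≠ Submodule.span F {y} ∧
        SimplexLine (Submodule.span F {x} ⊔ Submodule.span F {y})) ↔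
      (y i ≠ 0 ∧ ∑ j ∈ Finset.univ.erase i, (x j)⁻¹ * y j = 0)) := by
  have : CharP F 2 := ringChar.of_eq (FiniteField.even_card_iff_char_two.mpr (by rw [hF]))
  suffices h : SimplexAdjacent (span F {x}) (span F {y}) ↔
      y i ≠ 0 ∧ ∑ j ∈ Finset.univ.erase i, (x j)⁻¹ * y j = 0 from
    ⟨fun hadj => (h.mp hadj).2, h⟩
  obtain ⟨j, hj⟩ := exists_ne i
  rw [simplexAdjacent_iff_bijOn hx hy hxi hj]
  refine and_congr_right fun hyi => ⟨Finset.sum_eq_zero_of_bijOn_univ (by omega), fun hsum => ?_⟩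
  obtain ⟨k, hk, hk_unique⟩ := simplexVec_iff_existsUnique.mp hy
  have hki : k ≠ i := fun h => hyi (h ▸ hk)
  refine Finset.bijOn_univ_of_card_eq_four_of_sum_eq_zero hF (by simp)
    (Finset.mem_erase.mpr ⟨hki, Finset.mem_univ k⟩) (fun l hl => ?_) hsum
  rw [mul_eq_zero, inv_eq_zero, or_iff_right (hx.apply_ne_zero hxi (Finset.mem_erase.mp hl).1)]
  exact ⟨hk_unique l, fun h => h ▸ hk⟩
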